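/- arXiv:0907.5089 — 4 statements merged into one kernel-verified Lean document; each statement's English description precedes it below -/
import Mathlib

section
/- Let p be a prime and let m, d be integers with 1 ≤ m < d < p, and let a be an integer with p ≡ a (mod d). Then rep_p(m/d) = (p·t + m)/d, where t is the smallest positive integer such that d divides t·a + m. -/
/-!
Write `d · rep_p(m/d) = p·k + m`; the bounds `0 ≤ rep_p(m/d) < p` force `0 ≤ k < d`, and `k ≠ 0`
since `d ∤ m`. Reducing modulo `d` (where `p ≡ a`) shows that `k` is a positive solution of
`d ∣ s·a + m`. As `a` is prime to `d`, these solutions form one residue class modulo `d`,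
so the least one `t` lies in `[0, k]` and is congruent to `k < d`, whence `t = k`.
-/

/-- For a prime `p` and a rational `x` with denominator prime to `p`, `repp p x` is the
unique element of `{0, 1, ..., p-1}` congruent to `x` modulo `p`. -/
def repp (p : ℕ) (x : ℚ) : ℕ := ZMod.val ((x.num : ZMod p) * (x.den : ZMod p)⁻¹)

theorem natCast_repp_mul_den (p : ℕ) [Fact p.Prime] (x : ℚ) (hx : (x.den : ZMod p) ≠ 0) :
    (repp p x : ZMod p) * x.den = x.num := by
  rw [repp, ZMod.natCast_zmod_val, mul_assoc, inv_mul_cancel₀ hx, mul_one]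

theorem mul_repp_div (p : ℕ) [Fact p.Prime] (n d : ℤ) (hd : (d : ZMod p) ≠ 0) :
    (d : ZMod p) * repp p (n / d) = n := by
  set x : ℚ := n / d
  have hden : (x.den : ZMod p) ≠ 0 := by
    obtain ⟨c, hc⟩ := Rat.den_dvd n d
    rw [Rat.divInt_eq_div] at hc
    intro h
    exact hd (by rw [hc]; push_cast; rw [h, zero_mul])
  have hd0 : (d : ℚ) ≠ 0 := by rintro h; exact hd (by simp [Int.cast_eq_zero.mp h])
  have hcross : x.num * d = n * x.den := by
    have : (x.num : ℚ) * d = n * x.den := by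
      rw [← Rat.mul_den_eq_num]; simp only [x]; field_simp
    exact_mod_cast this
  apply mul_right_cancel₀ hden
  rw [mul_assoc, natCast_repp_mul_den p x hden, mul_comm]
  exact_mod_cast congrArg (Int.cast : ℤ → ZMod p) hcross

theorem exists_mul_repp_div_eq (p m d : ℕ) (hp : p.Prime) (hmp : m < p) (hd : 0 < d)
    (hdp : d < p) :
    ∃ k : ℤ, 0 ≤ k ∧ k < d ∧ (d : ℤ) * repp p ((m : ℚ) / d) = p * k + m := by
  have : Fact p.Prime := ⟨hp⟩
  have hdZ : ((d : ℤ) : ZMod p) ≠ 0 := by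
    rw [Int.cast_natCast, Ne, ZMod.natCast_eq_zero_iff]
    exact Nat.not_dvd_of_pos_of_lt hd hdp
  have hrep := mul_repp_div p m d hdZ
  push_cast at hrep
  obtain ⟨k, hk⟩ : (p : ℤ) ∣ d * repp p ((m : ℚ) / d) - m := by
    rw [← ZMod.intCast_zmod_eq_zero_iff_dvd]; push_cast; rw [hrep, sub_self]
  have hr : repp p ((m : ℚ) / d) < p := ZMod.val_lt _
  exact ⟨k, by nlinarith, by nlinarith, by linarith⟩

theorem Int.ModEq.isCoprime_iff {a b n : ℤ} (h : a ≡ b [ZMOD n]) :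
    IsCoprime a n ↔ IsCoprime b n := by
  obtain ⟨c, hc⟩ := h.dvd
  rw [show b = a + n * c by linarith, IsCoprime.add_mul_left_left_iff]

theorem Int.modEq_of_dvd_mul_add {a d m s k : ℤ} (hcop : IsCoprime a d) (hs : d ∣ s * a + m)
    (hk : d ∣ k * a + m) : s ≡ k [ZMOD d] := by
  refine Int.modEq_iff_dvd.mpr (hcop.symm.dvd_of_dvd_mul_right ?_)
  simpa only [sub_mul, add_sub_add_right_eq_sub] using dvd_sub hk hs

theorem rep_formula_general (p m d : ℕ) (hp : p.Prime) (hm : 1 ≤ m) (hmd : m < d) (hdp : d < p)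
    (a : ℤ) (ha : (p : ℤ) ≡ a [ZMOD (d : ℤ)])
    (t : ℕ) (hdiv : (d : ℤ) ∣ (t : ℤ) * a + m)
    (hmin : ∀ s : ℕ, 0 < s → (d : ℤ) ∣ (s : ℤ) * a + m → t ≤ s) :
    (d : ℤ) * repp p ((m : ℚ) / d) = (p : ℤ) * t + m := by
  obtain ⟨k, hk0, hkd, hrep⟩ := exists_mul_repp_div_eq p m d hp (by omega) (by omega) hdp
  have hka : (d : ℤ) ∣ k * a + m := by
    rw [← ((ha.mul_left k).add_right m).dvd_iff, mul_comm]
    exact ⟨_, hrep.symm⟩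
  have hk_pos : 0 < k := by
    refine hk0.lt_of_ne fun hk => ?_
    rw [← hk, mul_zero, zero_add] at hrep
    have : (d : ℤ) ≤ m := Int.le_of_dvd (by omega) ⟨_, hrep.symm⟩
    omega
  have htk : (t : ℤ) ≤ k := by
    have := hmin k.toNat (by omega) (by rwa [Int.toNat_of_nonneg hk0])
    omega
  have hcop : IsCoprime a d := by
    rw [← ha.isCoprime_iff, Nat.isCoprime_iff_coprime, hp.coprime_iff_not_dvd]
    exact Nat.not_dvd_of_pos_of_lt (by omega) hdp
  have htk_eq : (t : ℤ) = k := by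
    have hmod := Int.modEq_of_dvd_mul_add hcop hdiv hka
    rwa [Int.ModEq, Int.emod_eq_of_lt (by omega) (by omega), Int.emod_eq_of_lt hk0 hkd] at hmod
  rw [hrep, htk_eq]

/-- If `p ≡ a (mod d)` and `t` is the smallest positive integer with `d ∣ t·a + m`,
then `rep_p(m/d) = (p·t + m)/d`. -/
theorem rep_formula (p m d : ℕ) (hp : p.Prime) (hm : 1 ≤ m) (hmd : m < d) (hdp : d < p)
    (a : ℤ) (ha : (p : ℤ) ≡ a [ZMOD (d : ℤ)])
    (t : ℕ) (ht : 0 < t) (hdiv : (d : ℤ) ∣ (t : ℤ) * a + m)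
    (hmin : ∀ s : ℕ, 0 < s → (d : ℤ) ∣ (s : ℤ) * a + m → t ≤ s) :
    (d : ℤ) * repp p ((m : ℚ) / d) = (p : ℤ) * t + m :=
  rep_formula_general p m d hp hm hmd hdp a ha t hdiv hmin
end

section
/- Let p be a prime with p ≡ 1 (mod 5) and set t = (p−1)/5. Let T be a generator of the group of characters on 𝔽_p, and let a, b, c be integers such that a+c ≢ 0 (mod 5) and b+c ≢ 0 (mod 5). Then Σ_{e=0}^{p−2} T^e(−1)·J(T^{−e+at}, T^{−e+bt}, T^{e+ct}) = −(p−1). -/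
open Finset

/-- The standard additive character `θ(a) = e^{2πia/p}` on `𝔽_p`. -/
noncomputable def theta (p : ℕ) (a : ZMod p) : ℂ :=
  Complex.exp (2 * Real.pi * Complex.I * (ZMod.val a : ℂ) / (p : ℂ))

/-- The Gauss sum `G(χ) = ∑_{x ∈ 𝔽_p} χ(x) θ(x)`. -/
noncomputable def gaussS (p : ℕ) [NeZero p] (χ : MulChar (ZMod p) ℂ) : ℂ :=
  ∑ x : ZMod p, χ x * theta p x

/-- The generalized Jacobi sum `J(χ₁,χ₂,χ₃) = ∑_{t₁+t₂+t₃=1} χ₁(t₁)χ₂(t₂)χ₃(t₃)`. -/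
noncomputable def jacobi3 (p : ℕ) [NeZero p] (χ₁ χ₂ χ₃ : MulChar (ZMod p) ℂ) : ℂ :=
  ∑ v ∈ Finset.univ.filter (fun v : ZMod p × ZMod p × ZMod p => v.1 + v.2.1 + v.2.2 = 1),
    χ₁ v.1 * χ₂ v.2.1 * χ₃ v.2.2

section Aux

variable {p : ℕ} [Fact p.Prime]

lemma aux_pow_apply (χ : MulChar (ZMod p) ℂ) (n : ℕ) {x : ZMod p} (hx : IsUnit x) :
    (χ ^ n) x = χ x ^ n := by
  rcases Nat.eq_zero_or_pos n with rfl | h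
  · simp [MulChar.one_apply hx]
  · exact MulChar.pow_apply' χ h.ne' x

lemma aux_zpow_apply (χ : MulChar (ZMod p) ℂ) (n : ℤ) {x : ZMod p} (hx : IsUnit x) :
    (χ ^ n) x = χ x ^ n := by
  cases n with
  | ofNat m =>
      rw [Int.ofNat_eq_coe, zpow_natCast, zpow_natCast]
      exact aux_pow_apply χ m hx
  | negSucc m =>
      rw [zpow_negSucc, MulChar.inv_apply_eq_inv', aux_pow_apply χ (m+1) hx, zpow_negSucc]

lemma aux_inst (p : ℕ) [Fact p.Prime] : HasEnoughRootsOfUnity ℂ (Monoid.exponent (ZMod p)ˣ) := by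
  haveI : NeZero ((Monoid.exponent (ZMod p)ˣ : ℕ) : ℂ) :=
    ⟨Nat.cast_ne_zero.mpr Monoid.exponent_ne_zero_of_finite⟩
  infer_instance

lemma aux_T_ne_one (T : MulChar (ZMod p) ℂ) (hT : ∀ χ : MulChar (ZMod p) ℂ, ∃ n : ℕ, χ = T ^ n)
    {u : ZMod p} (hu : IsUnit u) (hu1 : u ≠ 1) : T u ≠ 1 := by
  haveI := aux_inst p
  intro h
  obtain ⟨χ, hχ⟩ := MulChar.exists_apply_ne_one_of_hasEnoughRootsOfUnity (ZMod p) ℂ hu1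
  obtain ⟨n, rfl⟩ := hT χ
  rw [aux_pow_apply _ _ hu, h, one_pow] at hχ
  exact hχ rfl

lemma aux_sum_pow (T : MulChar (ZMod p) ℂ) (hT : ∀ χ : MulChar (ZMod p) ℂ, ∃ n : ℕ, χ = T ^ n)
    {u : ZMod p} (hu : IsUnit u) :
    ∑ e ∈ Finset.range (p - 1), (T u) ^ e = if u = 1 then ((p : ℂ) - 1) else 0 := by
  split_ifs with h
  · subst h
    have h1 : (1 : ℕ) ≤ p := (Fact.out : p.Prime).one_lt.le
    simp only [map_one, one_pow, Finset.sum_const, Finset.card_range, nsmul_eq_mul, mul_one]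
    rw [Nat.cast_sub h1, Nat.cast_one]
  · have h2 : (T u) ^ (p - 1) = 1 := by
      rw [← map_pow, ZMod.pow_card_sub_one_eq_one hu.ne_zero, map_one]
    rw [geom_sum_eq (aux_T_ne_one T hT hu h), h2, sub_self, zero_div]

lemma aux_orderOf (T : MulChar (ZMod p) ℂ) (hT : ∀ χ : MulChar (ZMod p) ℂ, ∃ n : ℕ, χ = T ^ n) :
    orderOf T = p - 1 := by
  haveI := aux_inst p
  have h1 : Nat.card (MulChar (ZMod p) ℂ) = p - 1 := by
    rw [MulChar.card_eq_card_units_of_hasEnoughRootsOfUnity (ZMod p) ℂ,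
      Nat.card_eq_fintype_card, ZMod.card_units]
  have h2 : Subgroup.zpowers T = ⊤ := by
    rw [Subgroup.eq_top_iff']
    intro χ
    obtain ⟨n, rfl⟩ := hT χ
    exact Subgroup.pow_mem _ (Subgroup.mem_zpowers T) n
  have h3 := Nat.card_zpowers T
  rw [h2, Subgroup.card_top] at h3
  rw [← h3, h1]

lemma aux_zpow_ne_one (T : MulChar (ZMod p) ℂ) (hT : ∀ χ : MulChar (ZMod p) ℂ, ∃ n : ℕ, χ = T ^ n)
    {m : ℤ} (hm : ¬ ((p : ℤ) - 1) ∣ m) : T ^ m ≠ 1 := by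
  intro h
  apply hm
  have := orderOf_dvd_iff_zpow_eq_one.mpr h
  rw [aux_orderOf T hT] at this
  have h1 : (1 : ℕ) ≤ p := (Fact.out : p.Prime).one_lt.le
  rwa [Nat.cast_sub h1, Nat.cast_one] at this

lemma aux_neg_one (T : MulChar (ZMod p) ℂ) (c : ℤ) {t : ℕ} (ht2 : 2 ∣ t) :
    (T ^ (c * (t : ℤ))) (-1 : ZMod p) = 1 := by
  have hm1 : IsUnit (-1 : ZMod p) := isUnit_one.neg
  obtain ⟨s, rfl⟩ := ht2
  rw [aux_zpow_apply T _ hm1]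
  have h2 : (T (-1 : ZMod p)) ^ (2 : ℤ) = 1 := by
    rw [zpow_two, ← map_mul]
    norm_num
  calc (T (-1 : ZMod p)) ^ (c * ((2 * s : ℕ) : ℤ))
      = ((T (-1 : ZMod p)) ^ (2 : ℤ)) ^ (c * (s : ℤ)) := by
        rw [← zpow_mul]
        congr 1
        push_cast
        ring
    _ = 1 := by rw [h2, one_zpow]

lemma jacobi3_eq (p : ℕ) [NeZero p] (χ₁ χ₂ χ₃ : MulChar (ZMod p) ℂ) :
    jacobi3 p χ₁ χ₂ χ₃ = ∑ x : ZMod p, ∑ y : ZMod p, χ₁ x * χ₂ y * χ₃ (1 - x - y) := by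
  calc jacobi3 p χ₁ χ₂ χ₃
      = ∑ w : ZMod p × ZMod p, χ₁ w.1 * χ₂ w.2 * χ₃ (1 - w.1 - w.2) := by
        rw [jacobi3]
        refine Finset.sum_nbij' (fun v => (v.1, v.2.1)) (fun w => (w.1, w.2, 1 - w.1 - w.2))
          ?_ ?_ ?_ ?_ ?_
        · intro v _; exact Finset.mem_univ _
        · intro w _
          simp only [Finset.mem_filter, Finset.mem_univ, true_and]
          ring
        · intro v hv
          simp only [Finset.mem_filter, Finset.mem_univ, true_and] at hv
          obtain ⟨v1, v2, v3⟩ := v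
          have h : (1 : ZMod p) - v1 - v2 = v3 := by linear_combination -hv
          simp [h]
        · intro w _; rfl
        · intro v hv
          simp only [Finset.mem_filter, Finset.mem_univ, true_and] at hv
          have h : v.2.2 = 1 - v.1 - v.2.1 := by linear_combination hv
          rw [← h]
    _ = ∑ x : ZMod p, ∑ y : ZMod p, χ₁ x * χ₂ y * χ₃ (1 - x - y) := by
        rw [Fintype.sum_prod_type]

lemma aux_key (p : ℕ) [Fact p.Prime] (t : ℕ)
    (T : MulChar (ZMod p) ℂ) (hT : ∀ χ : MulChar (ZMod p) ℂ, ∃ n : ℕ, χ = T ^ n)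
    (a b c : ℤ) (x y : ZMod p) :
    (∑ e ∈ Finset.range (p - 1), (T ^ e) (-1 : ZMod p) *
      ((T ^ (-(e : ℤ) + a * t)) x * (T ^ (-(e : ℤ) + b * t)) y *
        (T ^ ((e : ℤ) + c * t)) (1 - x - y)))
    = (if 1 - x - y = -(x * y) then ((p : ℂ) - 1) else 0) *
      ((T ^ (a * (t : ℤ))) x * (T ^ (b * (t : ℤ))) y * (T ^ (c * (t : ℤ))) (1 - x - y)) := by
  by_cases hx : IsUnit x
  swap
  · simp [MulChar.map_nonunit _ hx]
  by_cases hy : IsUnit y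
  swap
  · simp [MulChar.map_nonunit _ hy]
  by_cases hz : IsUnit (1 - x - y)
  swap
  · simp [MulChar.map_nonunit _ hz]
  have hm1 : IsUnit (-1 : ZMod p) := isUnit_one.neg
  have hxinv : T x * T x⁻¹ = 1 := by
    rw [← map_mul, mul_inv_cancel₀ hx.ne_zero, map_one]
  have hyinv : T y * T y⁻¹ = 1 := by
    rw [← map_mul, mul_inv_cancel₀ hy.ne_zero, map_one]
  have hXne : T x ≠ 0 := left_ne_zero_of_mul_eq_one hxinv
  have hYne : T y ≠ 0 := left_ne_zero_of_mul_eq_one hyinv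
  have hZinv : T (1 - x - y) * T (1 - x - y)⁻¹ = 1 := by
    rw [← map_mul, mul_inv_cancel₀ hz.ne_zero, map_one]
  have hZne : T (1 - x - y) ≠ 0 := left_ne_zero_of_mul_eq_one hZinv
  have hXinv : T x⁻¹ = (T x)⁻¹ := ((inv_eq_of_mul_eq_one_right hxinv).symm)
  have hYinv : T y⁻¹ = (T y)⁻¹ := ((inv_eq_of_mul_eq_one_right hyinv).symm)
  set u : ZMod p := -1 * (x⁻¹ * (y⁻¹ * (1 - x - y))) with hu_def
  have hu_unit : IsUnit u := by
    refine hm1.mul (((isUnit_iff_ne_zero.mpr (inv_ne_zero hx.ne_zero))).mul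
      ((isUnit_iff_ne_zero.mpr (inv_ne_zero hy.ne_zero)).mul hz))
  have hTu : T u = T (-1) * ((T x)⁻¹ * ((T y)⁻¹ * T (1 - x - y))) := by
    rw [hu_def, map_mul, map_mul, map_mul, hXinv, hYinv]
  have hterm : ∀ e ∈ Finset.range (p - 1),
      (T ^ e) (-1 : ZMod p) *
        ((T ^ (-(e : ℤ) + a * t)) x * (T ^ (-(e : ℤ) + b * t)) y *
          (T ^ ((e : ℤ) + c * t)) (1 - x - y))
      = (T u) ^ e * ((T x) ^ (a * (t : ℤ)) * (T y) ^ (b * (t : ℤ)) *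
          (T (1 - x - y)) ^ (c * (t : ℤ))) := by
    intro e _
    rw [aux_pow_apply T e hm1, aux_zpow_apply T _ hx, aux_zpow_apply T _ hy,
      aux_zpow_apply T _ hz, zpow_add₀ hXne, zpow_add₀ hYne, zpow_add₀ hZne, hTu,
      mul_pow, mul_pow, mul_pow, zpow_neg, zpow_neg, zpow_natCast, zpow_natCast,
      zpow_natCast, inv_pow, inv_pow]
    ring
  rw [Finset.sum_congr rfl hterm, ← Finset.sum_mul, aux_sum_pow T hT hu_unit]
  have hx0 : x ≠ 0 := hx.ne_zero
  have hy0 : y ≠ 0 := hy.ne_zero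
  have hcond : (u = 1) ↔ (1 - x - y = -(x * y)) := by
    rw [hu_def]
    constructor
    · intro h
      field_simp at h
      linear_combination -h
    · intro h
      rw [h]
      field_simp
  rw [aux_zpow_apply T _ hx, aux_zpow_apply T _ hy, aux_zpow_apply T _ hz]
  simp only [hcond]

lemma aux_final (p : ℕ) [Fact p.Prime] (t : ℕ) (T : MulChar (ZMod p) ℂ) (a b c : ℤ)
    (hc1 : (T ^ (c * (t : ℤ))) (-1 : ZMod p) = 1)
    (hbc : T ^ ((b + c) * (t : ℤ)) ≠ 1)
    (hac : T ^ ((a + c) * (t : ℤ)) ≠ 1) :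
    ∑ x : ZMod p, ∑ y : ZMod p,
      (if 1 - x - y = -(x * y) then ((p : ℂ) - 1) else 0) *
        ((T ^ (a * (t : ℤ))) x * (T ^ (b * (t : ℤ))) y * (T ^ (c * (t : ℤ))) (1 - x - y))
    = -((p : ℂ) - 1) := by
  classical
  have hmul : ∀ (m n : ℤ) (y : ZMod p), (T ^ m) y * (T ^ n) y = (T ^ (m + n)) y := by
    intro m n y
    rw [zpow_add, MulChar.mul_apply]
  have hneg : ∀ (y : ZMod p), (T ^ (c * (t : ℤ))) (-y) = (T ^ (c * (t : ℤ))) y := by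
    intro y
    rw [show (-y : ZMod p) = -1 * y from (neg_one_mul y).symm, map_mul, hc1, one_mul]
  have hA : (∑ y : ZMod p,
      (if 1 - 1 - y = -(1 * y) then ((p : ℂ) - 1) else 0) *
        ((T ^ (a * (t : ℤ))) 1 * (T ^ (b * (t : ℤ))) y * (T ^ (c * (t : ℤ))) (1 - 1 - y))) = 0 := by
    have h1 : ∀ y : ZMod p,
        (if 1 - 1 - y = -(1 * y) then ((p : ℂ) - 1) else 0) *
          ((T ^ (a * (t : ℤ))) 1 * (T ^ (b * (t : ℤ))) y * (T ^ (c * (t : ℤ))) (1 - 1 - y))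
        = ((p : ℂ) - 1) * (T ^ ((b + c) * (t : ℤ))) y := by
      intro y
      rw [if_pos (by ring), show (1 : ZMod p) - 1 - y = -y from by ring, map_one, one_mul,
        hneg, hmul, show b * (t : ℤ) + c * t = (b + c) * t from by ring]
    rw [Finset.sum_congr rfl fun y _ => h1 y, ← Finset.mul_sum,
      MulChar.sum_eq_zero_of_ne_one hbc, mul_zero]
  have hC : (∑ x : ZMod p,
      (if 1 - x - 1 = -(x * 1) then ((p : ℂ) - 1) else 0) *
        ((T ^ (a * (t : ℤ))) x * (T ^ (b * (t : ℤ))) 1 * (T ^ (c * (t : ℤ))) (1 - x - 1))) = 0 := by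
    have h1 : ∀ x : ZMod p,
        (if 1 - x - 1 = -(x * 1) then ((p : ℂ) - 1) else 0) *
          ((T ^ (a * (t : ℤ))) x * (T ^ (b * (t : ℤ))) 1 * (T ^ (c * (t : ℤ))) (1 - x - 1))
        = ((p : ℂ) - 1) * (T ^ ((a + c) * (t : ℤ))) x := by
      intro x
      rw [if_pos (by ring), show (1 : ZMod p) - x - 1 = -x from by ring, map_one, mul_one,
        hneg, hmul, show a * (t : ℤ) + c * t = (a + c) * t from by ring]
    rw [Finset.sum_congr rfl fun x _ => h1 x, ← Finset.mul_sum,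
      MulChar.sum_eq_zero_of_ne_one hac, mul_zero]
  have hD : (if (1 : ZMod p) - 1 - 1 = -(1 * 1) then ((p : ℂ) - 1) else 0) *
      ((T ^ (a * (t : ℤ))) 1 * (T ^ (b * (t : ℤ))) 1 * (T ^ (c * (t : ℤ))) ((1 : ZMod p) - 1 - 1))
      = (p : ℂ) - 1 := by
    rw [if_pos (by ring), show (1 : ZMod p) - 1 - 1 = -1 from by ring, map_one, map_one, hc1]
    ring
  rw [← Finset.add_sum_erase _ _ (Finset.mem_univ (1 : ZMod p)), hA, zero_add]
  have hB : ∀ x ∈ Finset.univ.erase (1 : ZMod p),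
      (∑ y : ZMod p,
        (if 1 - x - y = -(x * y) then ((p : ℂ) - 1) else 0) *
          ((T ^ (a * (t : ℤ))) x * (T ^ (b * (t : ℤ))) y * (T ^ (c * (t : ℤ))) (1 - x - y)))
      = (if 1 - x - 1 = -(x * 1) then ((p : ℂ) - 1) else 0) *
          ((T ^ (a * (t : ℤ))) x * (T ^ (b * (t : ℤ))) 1 * (T ^ (c * (t : ℤ))) (1 - x - 1)) := by
    intro x hx
    have hx1 : x ≠ 1 := Finset.ne_of_mem_erase hx
    refine Finset.sum_eq_single 1 ?_ ?_
    · intro y _ hy1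
      rw [if_neg, zero_mul]
      intro h
      have h2 : (x - 1) * (y - 1) = 0 := by linear_combination h
      rcases mul_eq_zero.mp h2 with h3 | h3
      · exact hx1 (sub_eq_zero.mp h3)
      · exact hy1 (sub_eq_zero.mp h3)
    · intro h; exact absurd (Finset.mem_univ 1) h
  rw [Finset.sum_congr rfl hB, Finset.sum_erase_eq_sub (Finset.mem_univ (1 : ZMod p)), hC, hD]
  ring

end Aux

/-- Lemma 2.11 of McCarthy. -/
theorem jacobi_t_sum (p : ℕ) [Fact p.Prime] (hp : p % 5 = 1)
    (t : ℕ) (ht : t = (p - 1) / 5)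
    (T : MulChar (ZMod p) ℂ) (hT : ∀ χ : MulChar (ZMod p) ℂ, ∃ n : ℕ, χ = T ^ n)
    (a b c : ℤ) (hac : ¬ (5 : ℤ) ∣ (a + c)) (hbc : ¬ (5 : ℤ) ∣ (b + c)) :
    ∑ e ∈ Finset.range (p - 1),
      (T ^ e) (-1 : ZMod p) *
        jacobi3 p (T ^ (-(e : ℤ) + a * t)) (T ^ (-(e : ℤ) + b * t)) (T ^ ((e : ℤ) + c * t)) =
    -((p : ℂ) - 1) := by
  classical
  have hp' : p.Prime := Fact.out
  have hp2 : 2 ≤ p := hp'.two_le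
  have h5 : 5 ∣ p - 1 := by omega
  have ht5 : 5 * t = p - 1 := by rw [ht]; exact Nat.mul_div_cancel' h5
  have hpodd : p % 2 = 1 := by
    rcases hp'.eq_two_or_odd' with h | h
    · omega
    · exact Nat.odd_iff.mp h
  have ht2 : 2 ∣ t := by omega
  have htpos : 0 < t := by omega
  have htne : (t : ℤ) ≠ 0 := by exact_mod_cast htpos.ne'
  have hp1 : (p : ℤ) - 1 = 5 * (t : ℤ) := by omega
  have hdvd : ∀ m : ℤ, ¬ (5 : ℤ) ∣ m → T ^ (m * (t : ℤ)) ≠ 1 := by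
    intro m hm
    refine aux_zpow_ne_one T hT ?_
    intro hd
    rw [hp1] at hd
    exact hm ((mul_dvd_mul_iff_right htne).mp hd)
  calc ∑ e ∈ Finset.range (p - 1),
      (T ^ e) (-1 : ZMod p) *
        jacobi3 p (T ^ (-(e : ℤ) + a * t)) (T ^ (-(e : ℤ) + b * t)) (T ^ ((e : ℤ) + c * t))
      = ∑ x : ZMod p, ∑ y : ZMod p, ∑ e ∈ Finset.range (p - 1),
          (T ^ e) (-1 : ZMod p) *
            ((T ^ (-(e : ℤ) + a * t)) x * (T ^ (-(e : ℤ) + b * t)) y *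
              (T ^ ((e : ℤ) + c * t)) (1 - x - y)) := by
        simp_rw [jacobi3_eq, Finset.mul_sum]
        rw [Finset.sum_comm]
        exact Finset.sum_congr rfl fun x _ => Finset.sum_comm
    _ = ∑ x : ZMod p, ∑ y : ZMod p,
          (if 1 - x - y = -(x * y) then ((p : ℂ) - 1) else 0) *
            ((T ^ (a * (t : ℤ))) x * (T ^ (b * (t : ℤ))) y * (T ^ (c * (t : ℤ))) (1 - x - y)) :=
        Finset.sum_congr rfl fun x _ => Finset.sum_congr rfl fun y _ => aux_key p t T hT a b c x y
    _ = -((p : ℂ) - 1) :=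
        aux_final p t T a b c (aux_neg_one T c ht2) (hdvd _ hbc) (hdvd _ hac)
end

section
/- Let p be a prime with p ≡ 1 (mod 5) and set t = (p−1)/5. Let T be a generator of the group of characters on 𝔽_p, and let a, b, c be integers such that a+c ≢ 0 (mod 5) and b+c ≢ 0 (mod 5). Then Σ_{e=0}^{p−2} G_{−e+at}·G_{−e+bt}·G_{e+ct}·G_{e−(a+b+c)t} = −p(p−1). -/
/-!
Write `α = T^{at}`, `β = T^{bt}`, `γ = T^{ct}`, `δ = T^{-(a+b+c)t}` and `χ = T^e`; as `e` runs
over `0, …, p-2`, `χ` runs once over all characters. In the summand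
`G(χ⁻¹α) G(χ⁻¹β) G(χγ) G(χδ)` the pairs `(χ⁻¹α, χδ)` and `(χ⁻¹β, χγ)` have the fixed products
`λ⁻¹` and `λ = T^{(b+c)t} ≠ ε`, so the summand is `G(λ⁻¹) G(λ) J(χ⁻¹α, χδ) J(χ⁻¹β, χγ)` with
`G(λ) G(λ⁻¹) = λ(-1) p`. Expanding the two Jacobi sums and summing over `χ` first, orthogonality
of characters keeps only the terms with `y = 1 - x`, which add up to `(p - 1) J(μ, μ⁻¹)` for
`μ = αγ = T^{(a+c)t} ≠ ε`, and `J(μ, μ⁻¹) = -μ(-1)`. Finally `λ(-1) = μ(-1) = 1` because `t` is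
even.
-/

open Finset

theorem IsCyclic.sum_range_orderOf_pow {G M : Type*} [Group G] [Fintype G] [AddCommMonoid M]
    {g : G} (hg : ∀ x, x ∈ Subgroup.zpowers g) (f : G → M) :
    ∑ e ∈ range (orderOf g), f (g ^ e) = ∑ x, f x := by
  classical
  rw [← IsCyclic.image_range_orderOf hg, sum_image]
  exact fun i hi j hj h ↦ pow_injOn_Iio_orderOf (by simpa using hi) (by simpa using hj) h

namespace MulChar

theorem zpow_apply_neg_one_of_even {M R : Type*} [CommRing M] [CommRing R] (χ : MulChar M R)
    {n : ℤ} (hn : Even n) : (χ ^ n) (-1) = 1 := by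
  obtain ⟨k, rfl⟩ := hn
  rw [← two_mul, mul_comm, zpow_mul, zpow_two, mul_apply, ← map_mul, neg_one_mul, neg_neg,
    map_one]

section Duality

variable {M R : Type*} [CommMonoid M] [Finite M] [CommRing R]
  [HasEnoughRootsOfUnity R (Monoid.exponent Mˣ)]

theorem orderOf_eq_card_units {T : MulChar M R} (hT : ∀ χ, χ ∈ Subgroup.zpowers T) :
    orderOf T = Nat.card Mˣ := by
  rw [orderOf_eq_card_of_forall_mem_zpowers hT, card_eq_card_units_of_hasEnoughRootsOfUnity]

theorem sum_apply_eq_ite [IsDomain R] [Fintype (MulChar M R)] [DecidableEq M] (a : M) :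
    ∑ χ : MulChar M R, χ a = if a = 1 then (Nat.card Mˣ : R) else 0 := by
  split_ifs with ha
  · simp [ha, ← Nat.card_eq_fintype_card, card_eq_card_units_of_hasEnoughRootsOfUnity]
  · obtain ⟨χ, hχ⟩ := exists_apply_ne_one_of_hasEnoughRootsOfUnity M R ha
    refine eq_zero_of_mul_eq_self_left hχ ?_
    simp only [mul_sum, ← mul_apply]
    exact Fintype.sum_bijective _ (Group.mulLeft_bijective χ) _ _ fun _ ↦ rfl

end Duality

end MulChar

theorem gaussS_eq_gaussSum (p : ℕ) [NeZero p] (χ : MulChar (ZMod p) ℂ) :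
    gaussS p χ = gaussSum χ ZMod.stdAddChar := by
  simp only [gaussS, gaussSum, ZMod.stdAddChar_apply, ZMod.toCircle_apply, theta]

theorem inv_mul_one_sub_mul_inv_mul_one_sub_eq_one_iff {F : Type*} [Field F] {x y : F}
    (hx : x ≠ 0) (hy : y ≠ 0) : x⁻¹ * (1 - x) * (y⁻¹ * (1 - y)) = 1 ↔ y = 1 - x := by
  constructor <;> intro h
  · field_simp at h
    linear_combination -h
  · subst h
    field_simp
    ring

section FiniteField

variable {F R : Type*} [Field F] [Fintype F] [CommRing R] [IsDomain R]

theorem gaussSum_mul_gaussSum_inv {χ : MulChar F R} (hχ : χ ≠ 1) {ψ : AddChar F R}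
    (hψ : ψ.IsPrimitive) : gaussSum χ ψ * gaussSum χ⁻¹ ψ = χ (-1) * Fintype.card F := by
  rw [← mul_gaussSum_inv_eq_gaussSum χ⁻¹, mul_left_comm, gaussSum_mul_gaussSum_eq_card hχ hψ,
    MulChar.inv_apply', inv_neg_one]

theorem sum_jacobiSum_mul_jacobiSum [Fintype (MulChar F R)]
    [HasEnoughRootsOfUnity R (Monoid.exponent Fˣ)] (χ₁ χ₂ χ₃ χ₄ : MulChar F R) :
    ∑ χ, jacobiSum (χ⁻¹ * χ₁) (χ * χ₄) * jacobiSum (χ⁻¹ * χ₂) (χ * χ₃) =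
      Nat.card Fˣ * jacobiSum (χ₁ * χ₃) (χ₄ * χ₂) := by
  classical
  set A : F → F → R := fun x y ↦ χ₁ x * χ₄ (1 - x) * (χ₂ y * χ₃ (1 - y)) with hA
  have hsplit (χ : MulChar F R) (x y : F) :
      (χ⁻¹ * χ₁) x * (χ * χ₄) (1 - x) * ((χ⁻¹ * χ₂) y * (χ * χ₃) (1 - y)) =
        A x y * χ (x⁻¹ * (1 - x) * (y⁻¹ * (1 - y))) := by
    simp only [hA, MulChar.mul_apply, MulChar.inv_apply', map_mul]
    ring
  have hdiag (x y : F) :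
      A x y * (if x⁻¹ * (1 - x) * (y⁻¹ * (1 - y)) = 1 then (Nat.card Fˣ : R) else 0) =
        if y = 1 - x then A x y * Nat.card Fˣ else 0 := by
    rcases eq_or_ne x 0 with rfl | hx
    · simp [hA, MulChar.map_zero]
    rcases eq_or_ne y 0 with rfl | hy
    · simp [hA, MulChar.map_zero]
    simp only [inv_mul_one_sub_mul_inv_mul_one_sub_eq_one_iff hx hy, mul_ite, mul_zero]
  calc ∑ χ, jacobiSum (χ⁻¹ * χ₁) (χ * χ₄) * jacobiSum (χ⁻¹ * χ₂) (χ * χ₃)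
      = ∑ x, ∑ y, A x y * ∑ χ : MulChar F R, χ (x⁻¹ * (1 - x) * (y⁻¹ * (1 - y))) := by
        simp only [jacobiSum, sum_mul_sum]
        simp only [hsplit, mul_sum]
        rw [sum_comm]
        exact sum_congr rfl fun x _ ↦ sum_comm
    _ = ∑ x, A x (1 - x) * Nat.card Fˣ := by
        simp only [MulChar.sum_apply_eq_ite, hdiag, sum_ite_eq', mem_univ, if_true]
    _ = Nat.card Fˣ * jacobiSum (χ₁ * χ₃) (χ₄ * χ₂) := by
        simp only [hA, jacobiSum, mul_sum, MulChar.mul_apply, sub_sub_cancel]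
        exact sum_congr rfl fun x _ ↦ by ring

theorem gaussSum_mul_gaussSum_mul_gaussSum_mul_gaussSum {φ₁ φ₂ φ₃ φ₄ : MulChar F R}
    (h₁₄ : φ₁ * φ₄ = (φ₂ * φ₃)⁻¹) (h₂₃ : φ₂ * φ₃ ≠ 1) {ψ : AddChar F R} (hψ : ψ.IsPrimitive) :
    gaussSum φ₁ ψ * gaussSum φ₂ ψ * gaussSum φ₃ ψ * gaussSum φ₄ ψ =
      (φ₂ * φ₃) (-1) * Fintype.card F * (jacobiSum φ₁ φ₄ * jacobiSum φ₂ φ₃) := by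
  have j₁₄ := jacobiSum_mul_nontrivial (h₁₄ ▸ inv_ne_one.mpr h₂₃) ψ
  have j₂₃ := jacobiSum_mul_nontrivial h₂₃ ψ
  rw [h₁₄] at j₁₄
  calc gaussSum φ₁ ψ * gaussSum φ₂ ψ * gaussSum φ₃ ψ * gaussSum φ₄ ψ
      = (gaussSum φ₁ ψ * gaussSum φ₄ ψ) * (gaussSum φ₂ ψ * gaussSum φ₃ ψ) := by ring
    _ = gaussSum (φ₂ * φ₃) ψ * gaussSum (φ₂ * φ₃)⁻¹ ψ * (jacobiSum φ₁ φ₄ * jacobiSum φ₂ φ₃) := by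
        rw [← j₁₄, ← j₂₃]
        ring
    _ = _ := by rw [gaussSum_mul_gaussSum_inv h₂₃ hψ]

theorem sum_gaussSum_mul_gaussSum_mul_gaussSum_mul_gaussSum [Fintype (MulChar F R)]
    [HasEnoughRootsOfUnity R (Monoid.exponent Fˣ)] {χ₁ χ₂ χ₃ χ₄ : MulChar F R}
    (h : χ₁ * χ₂ * χ₃ * χ₄ = 1) (h₂₃ : χ₂ * χ₃ ≠ 1) (h₁₃ : χ₁ * χ₃ ≠ 1) {ψ : AddChar F R}
    (hψ : ψ.IsPrimitive) :
    ∑ χ, gaussSum (χ⁻¹ * χ₁) ψ * gaussSum (χ⁻¹ * χ₂) ψ * gaussSum (χ * χ₃) ψ *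
        gaussSum (χ * χ₄) ψ =
      -((χ₂ * χ₃) (-1) * (χ₁ * χ₃) (-1)) * Fintype.card F * Nat.card Fˣ := by
  have h₂₃' (χ : MulChar F R) : χ⁻¹ * χ₂ * (χ * χ₃) = χ₂ * χ₃ := by
    rw [mul_mul_mul_comm, inv_mul_cancel, one_mul]
  have h₁₄ (χ : MulChar F R) : χ⁻¹ * χ₁ * (χ * χ₄) = (χ⁻¹ * χ₂ * (χ * χ₃))⁻¹ := by
    rw [mul_mul_mul_comm, inv_mul_cancel, one_mul, h₂₃', eq_inv_iff_mul_eq_one, ← h]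
    ac_rfl
  have h₄₂ : χ₄ * χ₂ = (χ₁ * χ₃)⁻¹ := by
    rw [eq_inv_iff_mul_eq_one, ← h]
    ac_rfl
  simp only [fun χ ↦ gaussSum_mul_gaussSum_mul_gaussSum_mul_gaussSum (h₁₄ χ) (h₂₃' χ ▸ h₂₃) hψ,
    h₂₃', ← mul_sum, sum_jacobiSum_mul_jacobiSum, h₄₂, jacobiSum_nontrivial_inv h₁₃]
  ring

end FiniteField

/-- Corollary 2.12 of McCarthy. -/
theorem gauss_t_sum (p : ℕ) [Fact p.Prime] (hp : p % 5 = 1)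
    (t : ℕ) (ht : t = (p - 1) / 5)
    (T : MulChar (ZMod p) ℂ) (hT : ∀ χ : MulChar (ZMod p) ℂ, ∃ n : ℕ, χ = T ^ n)
    (a b c : ℤ) (hac : ¬ (5 : ℤ) ∣ (a + c)) (hbc : ¬ (5 : ℤ) ∣ (b + c)) :
    ∑ e ∈ Finset.range (p - 1),
      gaussS p (T ^ (-(e : ℤ) + a * t)) * gaussS p (T ^ (-(e : ℤ) + b * t)) *
      gaussS p (T ^ ((e : ℤ) + c * t)) * gaussS p (T ^ ((e : ℤ) - (a + b + c) * t)) =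
    -(p : ℂ) * ((p : ℂ) - 1) := by
  have hp2 : 2 ≤ p := (Fact.out : p.Prime).two_le
  have hodd : p % 2 = 1 := Nat.odd_iff.mp ((Fact.out : p.Prime).odd_of_ne_two (by omega))
  have h5t : p - 1 = 5 * t := by omega
  have hcard : Nat.card (ZMod p)ˣ = p - 1 := Nat.card_eq_fintype_card.trans (ZMod.card_units p)
  have hgen (χ : MulChar (ZMod p) ℂ) : χ ∈ Subgroup.zpowers T := by
    obtain ⟨n, rfl⟩ := hT χ
    exact Subgroup.npow_mem_zpowers T n
  have hord : orderOf T = p - 1 := (MulChar.orderOf_eq_card_units hgen).trans hcard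
  have hnontriv (m : ℤ) (hm : ¬ (5 : ℤ) ∣ m) : T ^ (m * t) ≠ 1 := by
    intro h
    have hdvd := orderOf_dvd_iff_zpow_eq_one.mpr h
    rw [hord, h5t, Nat.cast_mul, Nat.cast_ofNat] at hdvd
    exact hm ((mul_dvd_mul_iff_right (by omega)).mp hdvd)
  have ht_even : Even (t : ℤ) := (Int.even_coe_nat t).mpr (Nat.even_iff.mpr (by omega))
  have heven (m : ℤ) : (T ^ (m * t)) (-1) = 1 := T.zpow_apply_neg_one_of_even (ht_even.mul_left m)
  simp only [gaussS_eq_gaussSum, zpow_add, zpow_sub, zpow_neg, zpow_natCast]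
  rw [← hord, IsCyclic.sum_range_orderOf_pow hgen fun χ ↦
      gaussSum (χ⁻¹ * T ^ (a * t : ℤ)) ZMod.stdAddChar *
      gaussSum (χ⁻¹ * T ^ (b * t : ℤ)) ZMod.stdAddChar *
      gaussSum (χ * T ^ (c * t : ℤ)) ZMod.stdAddChar *
      gaussSum (χ * (T ^ ((a + b + c) * t : ℤ))⁻¹) ZMod.stdAddChar,
    sum_gaussSum_mul_gaussSum_mul_gaussSum_mul_gaussSum _ _ _ (ZMod.isPrimitive_stdAddChar p)]
  · simp only [MulChar.mul_apply, heven, ZMod.card, hcard]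
    push_cast [Nat.one_le_of_lt hp2]
    ring
  · rw [← zpow_add, ← zpow_add, mul_inv_eq_one]
    congr 1
    ring
  · rw [← zpow_add, ← add_mul]
    exact hnontriv _ hbc
  · rw [← zpow_add, ← add_mul]
    exact hnontriv _ hac
end

section
/- Let p ≠ 5 be a prime and let N_p denote the number of points in ℙ^4(𝔽_p) on x_0^5+x_1^5+x_2^5+x_3^5+x_4^5−5x_0x_1x_2x_3x_4=0. Define the complex numbers A := Σ_{z, x_1 ∈ 𝔽_p^*} θ(z(1+x_1^5)), B := Σ_{z, x_1, x_2 ∈ 𝔽_p^*} θ(z(1+x_1^5+x_2^5)), C := Σ_{z, x_1, x_2, x_3 ∈ 𝔽_p^*} θ(z(1+x_1^5+x_2^5+x_3^5)), and D := Σ_{z, x_1, x_2, x_3, x_4 ∈ 𝔽_p^*} θ(z(1+x_1^5+x_2^5+x_3^5+x_4^5−5x_1x_2x_3x_4)). Then p·N_p = p^4 + p^3 + p^2 + p − 4 + 10A + 10B + 5C + D. -/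
open Finset

/-- The quintic `x₀⁵+x₁⁵+x₂⁵+x₃⁵+x₄⁵ - 5x₀x₁x₂x₃x₄` evaluated on a vector over `𝔽_p`. -/
def quinticF (p : ℕ) (x : Fin 5 → ZMod p) : ZMod p :=
  (∑ i, x i ^ 5) - 5 * ∏ i, x i

/-- The number of points in `ℙ⁴(𝔽_p)` on the Dwork quintic. -/
noncomputable def Np (p : ℕ) [Fact p.Prime] : ℕ :=
  Nat.card {v : Projectivization (ZMod p) (Fin 5 → ZMod p) // quinticF p v.rep = 0}

/-!
For the quintic `F`, orthogonality of `θ` gives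
`p · #{x ∈ 𝔽_p⁵ : F x = 0} = p⁵ + ∑_{z ≠ 0} ∑_x θ(z F x)`, and since `F` is homogeneous this
affine cone has `1 + (p - 1) N_p` points. Split every coordinate of `x` into the values `0` and
`𝔽_p^*`. A term with `k ≥ 1` nonzero coordinates `a, x₂, …` becomes, after substituting
`xᵢ ↦ a xᵢ` and `z ↦ z a⁻⁵`, `(p - 1)` times the same sum at `a = 1`: this is `-(p - 1)` for
`k = 1` and `(p - 1)` times `A, B, C, D` for `k = 2, 3, 4, 5`, occurring `(5 choose k)` times.
The term `k = 0` is `p - 1`, and dividing by `p - 1` gives the formula.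
-/

lemma theta_zero {p : ℕ} : theta p 0 = 1 := by simp [theta]

noncomputable def thetaChar (p : ℕ) [NeZero p] : AddChar (ZMod p) ℂ :=
  AddChar.zmodChar p ((Complex.isPrimitiveRoot_exp p (NeZero.ne p)).pow_eq_one)

section Character

variable {p : ℕ} [NeZero p]

lemma thetaChar_apply (a : ZMod p) : thetaChar p a = theta p a := by
  rw [thetaChar, AddChar.zmodChar_apply, theta, ← Complex.exp_nat_mul]
  ring_nf

lemma thetaChar_isPrimitive : (thetaChar p).IsPrimitive :=
  AddChar.zmodChar_primitive_of_primitive_root p (Complex.isPrimitiveRoot_exp p (NeZero.ne p))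

lemma sum_theta_mul (b : ZMod p) :
    ∑ z : ZMod p, theta p (z * b) = if b = 0 then (p : ℂ) else 0 := by
  simp_rw [← thetaChar_apply, AddChar.sum_mulShift b thetaChar_isPrimitive, ZMod.card]
  push_cast
  rfl

end Character

lemma Fintype.sum_eq_add_sum_units {G₀ M : Type*} [GroupWithZero G₀] [Fintype G₀] [DecidableEq G₀]
    [AddCommMonoid M] (f : G₀ → M) : ∑ a, f a = f 0 + ∑ u : G₀ˣ, f u := by
  rw [Fintype.sum_eq_add_sum_subtype_ne f 0, ← unitsEquivNeZero.sum_comp]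
  rfl

lemma Fintype.sum_pi_fin_succ {α M : Type*} [Fintype α] [AddCommMonoid M] {n : ℕ}
    (f : (Fin (n + 1) → α) → M) : ∑ x, f x = ∑ a, ∑ y : Fin n → α, f (Fin.cons a y) := by
  rw [← (Fin.consEquiv fun _ => α).sum_comp, Fintype.sum_prod_type]
  rfl

lemma sum_units_dehomogenize {K M R : Type*} [CommMonoid K] [Fintype Kˣ]
    [Fintype M] [MulAction Kˣ M] [AddCommMonoid R] (ψ : K → R) (F : Kˣ → M → K) (G : M → K)
    (d : ℕ) (hF : ∀ a m, F a (a • m) = a ^ d * G m) :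
    ∑ z : Kˣ, ∑ a : Kˣ, ∑ m, ψ (z * F a m) = Fintype.card Kˣ • ∑ z : Kˣ, ∑ m, ψ (z * G m) := by
  rw [Finset.sum_comm, ← Finset.card_univ, ← Finset.sum_const]
  refine Finset.sum_congr rfl fun a _ => ?_
  calc ∑ z : Kˣ, ∑ m, ψ (z * F a m)
      = ∑ z : Kˣ, ∑ m, ψ (z * F a (a • m)) :=
        Finset.sum_congr rfl fun z _ => (Equiv.sum_comp (MulAction.toPerm a) _).symm
    _ = ∑ z : Kˣ, ∑ m, ψ ((z * a ^ d : Kˣ) * G m) := by simp [hF, mul_assoc]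
    _ = ∑ z : Kˣ, ∑ m, ψ (z * G m) :=
        Equiv.sum_comp (Equiv.mulRight (a ^ d)) fun z => ∑ m, ψ (z * G m)

open scoped LinearAlgebra.Projectivization in
lemma Projectivization.card_zeros_of_homogeneous {K V : Type*} [Field K] [Finite K]
    [AddCommGroup V] [Module K V] [Finite V] (F : V → K) {d : ℕ} (hd : d ≠ 0)
    (hF : ∀ (c : K) (x : V), F (c • x) = c ^ d * F x) :
    Nat.card {x : V // F x = 0} = Nat.card {v : ℙ K V // F v.rep = 0} * (Nat.card K - 1) + 1 := by
  have hF0 : F 0 = 0 := by simpa [zero_pow hd] using hF 0 0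
  have hrep (x : V) (hx : x ≠ 0) : F x = 0 ↔ F (mk K x hx).rep = 0 := by
    obtain ⟨a, ha⟩ := exists_smul_eq_mk_rep K x hx
    rw [← ha, Units.smul_def, hF, mul_eq_zero, or_iff_right (pow_ne_zero d a.ne_zero)]
  have hnonzero : {x : V // x ≠ 0 ∧ F x = 0} ≃ {v : ℙ K V // F v.rep = 0} × Kˣ :=
    (Equiv.subtypeSubtypeEquivSubtypeInter (· ≠ 0) (F · = 0)).symm.trans <|
      ((nonZeroEquivProjectivizationProdUnits K V).subtypeEquiv fun x => hrep x.1 x.2).trans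
        Equiv.prodSubtypeFstEquivSubtypeProd
  calc Nat.card {x : V // F x = 0}
      = Nat.card {x : V // x ≠ 0 ∧ F x = 0} + 1 := by
        change Nat.card {x | F x = 0} = Nat.card {x | x ≠ 0 ∧ F x = 0} + 1
        rw [Nat.card_coe_set_eq, Nat.card_coe_set_eq,
          ← Set.ncard_sdiff_singleton_add_one (s := {x | F x = 0}) hF0 (Set.toFinite _)]
        congr 2
        ext x
        simp [and_comm]
    _ = Nat.card {v : ℙ K V // F v.rep = 0} * (Nat.card K - 1) + 1 := by
        rw [Nat.card_congr hnonzero, Nat.card_prod, Nat.card_units]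


lemma quinticF_smul {p : ℕ} (c : ZMod p) (x : Fin 5 → ZMod p) :
    quinticF p (c • x) = c ^ 5 * quinticF p x := by
  simp only [quinticF, Pi.smul_apply, smul_eq_mul, mul_pow, ← Finset.mul_sum,
    Finset.prod_mul_distrib, Finset.prod_const, Finset.card_univ, Fintype.card_fin]
  ring

section Quintic

variable {p : ℕ} [Fact p.Prime]

lemma natCast_card_units_zmod : (Fintype.card (ZMod p)ˣ : ℂ) = p - 1 := by
  rw [ZMod.card_units p, Nat.cast_sub (Fact.out : p.Prime).one_le, Nat.cast_one]

lemma sum_units_theta : ∑ z : (ZMod p)ˣ, theta p z = -1 := by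
  have h := sum_theta_mul (p := p) 1
  rw [Fintype.sum_eq_add_sum_units, if_neg one_ne_zero] at h
  simp only [mul_one, theta_zero] at h
  linear_combination h

lemma natCast_mul_card_zeros {V : Type*} [Fintype V] (F : V → ZMod p) :
    (p : ℂ) * Nat.card {x : V // F x = 0} =
      Fintype.card V + ∑ z : (ZMod p)ˣ, ∑ x, theta p (z * F x) := by
  classical
  calc (p : ℂ) * Nat.card {x : V // F x = 0}
      = ∑ x, ∑ z : ZMod p, theta p (z * F x) := by
        simp_rw [sum_theta_mul, Finset.sum_ite, Finset.sum_const_zero, add_zero,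
          Finset.sum_const, nsmul_eq_mul, Nat.card_eq_fintype_card, Fintype.card_subtype, mul_comm]
    _ = ∑ x, (1 + ∑ z : (ZMod p)ˣ, theta p (z * F x)) := by
        simp_rw [Fintype.sum_eq_add_sum_units (fun z : ZMod p => theta p (z * F _)), zero_mul,
          theta_zero]
    _ = Fintype.card V + ∑ z : (ZMod p)ˣ, ∑ x, theta p (z * F x) := by
        rw [Finset.sum_add_distrib, Finset.sum_comm, Finset.sum_const, Finset.card_univ,
          nsmul_one]

lemma sum_units_theta_pow_five :
    ∑ z : (ZMod p)ˣ, ∑ a : (ZMod p)ˣ, theta p (z * a ^ 5) = -(p - 1) := by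
  have h := sum_units_dehomogenize (M := Unit) (theta p) (fun a _ => (a : ZMod p) ^ 5)
    (fun _ => 1) 5 fun a _ => (mul_one _).symm
  simp only [Fintype.sum_unique, mul_one, nsmul_eq_mul, natCast_card_units_zmod,
    sum_units_theta] at h
  rw [h, mul_neg_one]

lemma sum_units_theta_fermat_two :
    ∑ z : (ZMod p)ˣ, ∑ a : (ZMod p)ˣ, ∑ b : (ZMod p)ˣ, theta p (z * (a ^ 5 + b ^ 5)) =
      (p - 1) * ∑ z : (ZMod p)ˣ, ∑ x₁ : (ZMod p)ˣ, theta p (z * (1 + (x₁ : ZMod p) ^ 5)) := by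
  have h := sum_units_dehomogenize (theta p)
    (fun a (b : (ZMod p)ˣ) => (a : ZMod p) ^ 5 + b ^ 5) (fun b => 1 + (b : ZMod p) ^ 5) 5
    fun a b => by simp only [smul_eq_mul, Units.val_mul]; ring
  rwa [nsmul_eq_mul, natCast_card_units_zmod] at h

lemma sum_units_theta_fermat_three :
    ∑ z : (ZMod p)ˣ, ∑ a : (ZMod p)ˣ, ∑ b : (ZMod p)ˣ, ∑ c : (ZMod p)ˣ,
        theta p (z * (a ^ 5 + (b ^ 5 + c ^ 5))) =
      (p - 1) * ∑ z : (ZMod p)ˣ, ∑ x₁ : (ZMod p)ˣ, ∑ x₂ : (ZMod p)ˣ,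
        theta p (z * (1 + (x₁ : ZMod p) ^ 5 + (x₂ : ZMod p) ^ 5)) := by
  have h := sum_units_dehomogenize (theta p) (M := (ZMod p)ˣ × (ZMod p)ˣ)
    (fun a m => (a : ZMod p) ^ 5 + ((m.1 : ZMod p) ^ 5 + (m.2 : ZMod p) ^ 5))
    (fun m => 1 + (m.1 : ZMod p) ^ 5 + (m.2 : ZMod p) ^ 5) 5
    fun a m => by simp only [Prod.smul_fst, Prod.smul_snd, smul_eq_mul, Units.val_mul]; ring
  simp only [Fintype.sum_prod_type, nsmul_eq_mul, natCast_card_units_zmod] at h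
  exact h

lemma sum_units_theta_fermat_four :
    ∑ z : (ZMod p)ˣ, ∑ a : (ZMod p)ˣ, ∑ b : (ZMod p)ˣ, ∑ c : (ZMod p)ˣ, ∑ d : (ZMod p)ˣ,
        theta p (z * (a ^ 5 + (b ^ 5 + (c ^ 5 + d ^ 5)))) =
      (p - 1) * ∑ z : (ZMod p)ˣ, ∑ x₁ : (ZMod p)ˣ, ∑ x₂ : (ZMod p)ˣ, ∑ x₃ : (ZMod p)ˣ,
        theta p (z * (1 + (x₁ : ZMod p) ^ 5 + (x₂ : ZMod p) ^ 5 + (x₃ : ZMod p) ^ 5)) := by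
  have h := sum_units_dehomogenize (theta p)
    (M := (ZMod p)ˣ × (ZMod p)ˣ × (ZMod p)ˣ)
    (fun a m => (a : ZMod p) ^ 5 + ((m.1 : ZMod p) ^ 5 + ((m.2.1 : ZMod p) ^ 5
      + (m.2.2 : ZMod p) ^ 5)))
    (fun m => 1 + (m.1 : ZMod p) ^ 5 + (m.2.1 : ZMod p) ^ 5 + (m.2.2 : ZMod p) ^ 5) 5
    fun a m => by simp only [Prod.smul_fst, Prod.smul_snd, smul_eq_mul, Units.val_mul]; ring
  simp only [Fintype.sum_prod_type, nsmul_eq_mul, natCast_card_units_zmod] at h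
  exact h

lemma sum_units_theta_dwork :
    ∑ z : (ZMod p)ˣ, ∑ a : (ZMod p)ˣ, ∑ b : (ZMod p)ˣ, ∑ c : (ZMod p)ˣ, ∑ d : (ZMod p)ˣ,
        ∑ e : (ZMod p)ˣ, theta p (z * (a ^ 5 + (b ^ 5 + (c ^ 5 + (d ^ 5 + e ^ 5)))
          - 5 * (a * (b * (c * (d * e)))))) =
      (p - 1) * ∑ z : (ZMod p)ˣ, ∑ x₁ : (ZMod p)ˣ, ∑ x₂ : (ZMod p)ˣ, ∑ x₃ : (ZMod p)ˣ,
        ∑ x₄ : (ZMod p)ˣ, theta p (z * (1 + (x₁ : ZMod p) ^ 5 + (x₂ : ZMod p) ^ 5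
          + (x₃ : ZMod p) ^ 5 + (x₄ : ZMod p) ^ 5
          - 5 * (x₁ : ZMod p) * (x₂ : ZMod p) * (x₃ : ZMod p) * (x₄ : ZMod p))) := by
  have h := sum_units_dehomogenize (theta p)
    (M := (ZMod p)ˣ × (ZMod p)ˣ × (ZMod p)ˣ × (ZMod p)ˣ)
    (fun a m => (a : ZMod p) ^ 5 + ((m.1 : ZMod p) ^ 5 + ((m.2.1 : ZMod p) ^ 5
      + ((m.2.2.1 : ZMod p) ^ 5 + (m.2.2.2 : ZMod p) ^ 5)))
      - 5 * (a * (m.1 * (m.2.1 * (m.2.2.1 * (m.2.2.2 : ZMod p))))))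
    (fun m => 1 + (m.1 : ZMod p) ^ 5 + (m.2.1 : ZMod p) ^ 5 + (m.2.2.1 : ZMod p) ^ 5
      + (m.2.2.2 : ZMod p) ^ 5 - 5 * m.1 * m.2.1 * m.2.2.1 * (m.2.2.2 : ZMod p)) 5
    fun a m => by simp only [Prod.smul_fst, Prod.smul_snd, smul_eq_mul, Units.val_mul]; ring
  simp only [Fintype.sum_prod_type, nsmul_eq_mul, natCast_card_units_zmod] at h
  exact h

end Quintic

theorem point_count_additive_general (p : ℕ) [Fact p.Prime]
    (A B C D : ℂ)
    (hA : A = ∑ z : (ZMod p)ˣ, ∑ x₁ : (ZMod p)ˣ,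
        theta p ((z : ZMod p) * (1 + (x₁ : ZMod p) ^ 5)))
    (hB : B = ∑ z : (ZMod p)ˣ, ∑ x₁ : (ZMod p)ˣ, ∑ x₂ : (ZMod p)ˣ,
        theta p ((z : ZMod p) * (1 + (x₁ : ZMod p) ^ 5 + (x₂ : ZMod p) ^ 5)))
    (hC : C = ∑ z : (ZMod p)ˣ, ∑ x₁ : (ZMod p)ˣ, ∑ x₂ : (ZMod p)ˣ, ∑ x₃ : (ZMod p)ˣ,
        theta p ((z : ZMod p) *
          (1 + (x₁ : ZMod p) ^ 5 + (x₂ : ZMod p) ^ 5 + (x₃ : ZMod p) ^ 5)))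
    (hD : D = ∑ z : (ZMod p)ˣ, ∑ x₁ : (ZMod p)ˣ, ∑ x₂ : (ZMod p)ˣ, ∑ x₃ : (ZMod p)ˣ,
        ∑ x₄ : (ZMod p)ˣ,
        theta p ((z : ZMod p) *
          (1 + (x₁ : ZMod p) ^ 5 + (x₂ : ZMod p) ^ 5 + (x₃ : ZMod p) ^ 5 + (x₄ : ZMod p) ^ 5
            - 5 * (x₁ : ZMod p) * (x₂ : ZMod p) * (x₃ : ZMod p) * (x₄ : ZMod p)))) :
    (p : ℂ) * (Np p : ℂ) =
      (p : ℂ) ^ 4 + (p : ℂ) ^ 3 + (p : ℂ) ^ 2 + (p : ℂ) - 4 + 10 * A + 10 * B + 5 * C + D := by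
  have hcount := natCast_mul_card_zeros (quinticF p)
  rw [Projectivization.card_zeros_of_homogeneous (quinticF p) (by norm_num) quinticF_smul, ← Np,
    Nat.card_zmod] at hcount
  simp only [Fintype.sum_pi_fin_succ, Fintype.sum_eq_add_sum_units, quinticF, Fin.sum_univ_succ,
    Fin.prod_univ_succ, Fin.prod_univ_zero, Fin.cons_zero, Fin.cons_succ, Fintype.sum_unique,
    Fin.default_eq_zero, Finset.sum_add_distrib] at hcount
  -- The `(5 choose k)` terms with `k` nonzero coordinates now agree up to bound names, so each
  -- rewrite below replaces all of them at once.
  simp only [ne_eq, OfNat.ofNat_ne_zero, not_false_eq_true, zero_pow, zero_mul, mul_zero, add_zero,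
    zero_add, sub_zero, mul_one, theta_zero, Finset.sum_const, Finset.card_univ, nsmul_one,
    natCast_card_units_zmod, Fintype.card_fun, Fintype.card_fin, ZMod.card] at hcount
  rw [sum_units_theta_pow_five, sum_units_theta_fermat_two,
    sum_units_theta_fermat_three, sum_units_theta_fermat_four, sum_units_theta_dwork,
    ← hA, ← hB, ← hC, ← hD] at hcount
  push_cast [Nat.cast_sub (Fact.out : p.Prime).one_le] at hcount
  have hp : (p : ℂ) - 1 ≠ 0 := sub_ne_zero.mpr (by exact_mod_cast (Fact.out : p.Prime).ne_one)
  apply mul_left_cancel₀ hp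
  linear_combination hcount

/-- Point-count formula for the Dwork quintic via the additive character. -/
theorem point_count_additive (p : ℕ) [Fact p.Prime] (hp5 : p ≠ 5)
    (A B C D : ℂ)
    (hA : A = ∑ z : (ZMod p)ˣ, ∑ x₁ : (ZMod p)ˣ,
        theta p ((z : ZMod p) * (1 + (x₁ : ZMod p) ^ 5)))
    (hB : B = ∑ z : (ZMod p)ˣ, ∑ x₁ : (ZMod p)ˣ, ∑ x₂ : (ZMod p)ˣ,
        theta p ((z : ZMod p) * (1 + (x₁ : ZMod p) ^ 5 + (x₂ : ZMod p) ^ 5)))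
    (hC : C = ∑ z : (ZMod p)ˣ, ∑ x₁ : (ZMod p)ˣ, ∑ x₂ : (ZMod p)ˣ, ∑ x₃ : (ZMod p)ˣ,
        theta p ((z : ZMod p) *
          (1 + (x₁ : ZMod p) ^ 5 + (x₂ : ZMod p) ^ 5 + (x₃ : ZMod p) ^ 5)))
    (hD : D = ∑ z : (ZMod p)ˣ, ∑ x₁ : (ZMod p)ˣ, ∑ x₂ : (ZMod p)ˣ, ∑ x₃ : (ZMod p)ˣ,
        ∑ x₄ : (ZMod p)ˣ,
        theta p ((z : ZMod p) *
          (1 + (x₁ : ZMod p) ^ 5 + (x₂ : ZMod p) ^ 5 + (x₃ : ZMod p) ^ 5 + (x₄ : ZMod p) ^ 5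
            - 5 * (x₁ : ZMod p) * (x₂ : ZMod p) * (x₃ : ZMod p) * (x₄ : ZMod p)))) :
    (p : ℂ) * (Np p : ℂ) =
      (p : ℂ) ^ 4 + (p : ℂ) ^ 3 + (p : ℂ) ^ 2 + (p : ℂ) - 4 + 10 * A + 10 * B + 5 * C + D :=
  point_count_additive_general p A B C D hA hB hC hD
end
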